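/- arXiv:0909.1697 — 5 statements merged into one kernel-verified Lean document; each statement's English description precedes it below -/
import Mathlib

section
/- Let A be a unital algebra over a field of characteristic zero, let Γ be a finite group acting on A by algebra automorphisms, and let A^Γ denote the subalgebra of Γ-invariant elements. Then every proper left ideal I of A^Γ generates a proper left ideal of A; that is, the left ideal A·I does not contain 1. -/
/-- Every proper left ideal `I` of the fixed-point subalgebra `A^Γ` generates a proper
left ideal of `A`: the left ideal `A·I` does not contain `1`. -/
theorem stmt_0 {k A Γ : Type*} [Field k] [CharZero k] [Ring A] [Algebra k A]
    [Group Γ] [Finite Γ] (σ : Γ →* (A ≃ₐ[k] A)) (I : Set A)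
    (hfix : ∀ x ∈ I, ∀ g : Γ, σ g x = x)
    (hzero : (0 : A) ∈ I)
    (hadd : ∀ x ∈ I, ∀ y ∈ I, x + y ∈ I)
    (hneg : ∀ x ∈ I, -x ∈ I)
    (hsmul : ∀ a : A, (∀ g : Γ, σ g a = a) → ∀ x ∈ I, a * x ∈ I)
    (hproper : (1 : A) ∉ I) :
    (1 : A) ∉ Submodule.span A I := by
  intro hmem
  have : Fintype Γ := Fintype.ofFinite Γ
  set n : ℕ := Fintype.card Γ with hn
  have hnk : ((n : k)) ≠ 0 := Nat.cast_ne_zero.mpr Fintype.card_ne_zero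
  -- the averaging operator
  set E : A →ₗ[k] A := ((n : k))⁻¹ • (∑ g : Γ, (σ g).toLinearMap) with hE
  have hEapp : ∀ a : A, E a = ((n : k))⁻¹ • ∑ g : Γ, σ g a := by
    intro a
    simp [hE, LinearMap.sum_apply]
  -- E a is Γ-invariant
  have hEinv : ∀ a : A, ∀ h : Γ, σ h (E a) = E a := by
    intro a h
    rw [hEapp, map_smul, map_sum]
    congr 1
    refine Fintype.sum_bijective (h * ·) (Group.mulLeft_bijective h) _ _ fun g => ?_
    rw [map_mul, AlgEquiv.mul_apply]
  -- E fixes 1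
  have hE1 : E 1 = 1 := by
    rw [hEapp]
    simp only [map_one, Finset.sum_const, Finset.card_univ, ← hn,
      ← Nat.cast_smul_eq_nsmul k, smul_smul]
    rw [inv_mul_cancel₀ hnk, one_smul]
  -- E (a * x) = E a * x for x fixed
  have hEmul : ∀ a x : A, (∀ g : Γ, σ g x = x) → E (a * x) = E a * x := by
    intro a x hx
    rw [hEapp, hEapp, smul_mul_assoc, Finset.sum_mul]
    congr 1
    exact Finset.sum_congr rfl fun g _ => by rw [map_mul, hx g]
  -- decompose 1 as a combination of elements of I
  obtain ⟨c, hc, h1⟩ := Submodule.mem_span_set.mp hmem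
  have key : E 1 ∈ I := by
    rw [← h1, map_finsuppSum, Finsupp.sum]
    refine Finset.sum_induction _ (· ∈ I) (fun a b ha hb => hadd a ha b hb) hzero ?_
    intro x hx
    have hxI : x ∈ I := hc hx
    rw [smul_eq_mul, hEmul (c x) x (fun g => hfix x hxI g)]
    exact hsmul (E (c x)) (hEinv (c x)) x hxI
  rw [hE1] at key
  exact hproper key
end

section
/- Let A be a finitely generated unital commutative algebra over an algebraically closed field K of characteristic zero, and let φ: A → K be a nonzero multiplicative polynomial map (φ(ab) = φ(a)φ(b)). Then there exists n ∈ ℕ with φ(z·1) = z^n for all z ∈ K, and there exist algebra homomorphisms χ₁, …, χₙ : A → K such that φ = χ₁ ⋯ χₙ (pointwise product). -/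
/-!
The polynomial `z ↦ φ (z • 1)` is multiplicative, hence equal to `z ^ n`, so `φ` is homogeneous of
degree `n`; symmetrising its degree-`n` component gives a symmetric `n`-linear form `G` with
`φ a = G (a, …, a)`. Polarization (characteristic zero) turns `φ (a * b) = φ a * φ b` into
`G (v₁ * b, …, vₙ * b) = G v * φ b`, so the functional `Λ` induced by `G` on `A^{⊗n}` is
multiplicative on the subalgebra `D` generated by the diagonal tensors `a ⊗ ⋯ ⊗ a`. The tensor
power is integral over `D`: `1 ⊗ ⋯ ⊗ a ⊗ ⋯ ⊗ 1` is a root of `∏ⱼ (X - aⱼ)`, whose value at a scalar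
`t` is the diagonal tensor `(t - a) ⊗ ⋯ ⊗ (t - a)`. By lying over, `Λ|_D` extends to a character
`Ψ` of `A^{⊗n}`, and `χᵢ = Ψ ∘ (a ↦ 1 ⊗ ⋯ ⊗ a ⊗ ⋯ ⊗ 1)`.
-/

open Polynomial
open scoped TensorProduct

namespace Polynomial

theorem eval_eq_pow_natDegree_of_eval_mul {K : Type*} [Field K] [Infinite K] {p : K[X]}
    (hp : p ≠ 0) (hmul : ∀ z w, p.eval (z * w) = p.eval z * p.eval w) (w : K) :
    p.eval w = w ^ p.natDegree := by
  have hcomp : p.comp (C w * X) = C (p.eval w) * p :=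
    Polynomial.funext fun z => by simp [hmul]
  have hlead := congrArg (coeff · p.natDegree) hcomp
  simp only [comp_C_mul_X_coeff, coeff_C_mul] at hlead
  exact mul_left_cancel₀ (leadingCoeff_ne_zero.2 hp) (by rw [leadingCoeff, hlead, mul_comm])

theorem coeff_mem_of_forall_eval_algebraMap_mem {K B : Type*} [Field K] [Infinite K] [Ring B]
    [Algebra K B] {M : Submodule K B} {p : B[X]} (h : ∀ t : K, p.eval (algebraMap K B t) ∈ M)
    (j : ℕ) : p.coeff j ∈ M := by
  by_contra hj
  have hjdeg : j < p.natDegree + 1 := by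
    by_contra hlt
    exact hj (by rw [coeff_eq_zero_of_natDegree_lt (by omega)]; exact M.zero_mem)
  obtain ⟨f, hfj, hfM⟩ := M.exists_dual_map_eq_bot_of_notMem hj inferInstance
  have hf : ∀ x ∈ M, f x = 0 := fun x hx => by
    simpa [hfM] using Submodule.mem_map_of_mem (f := f) hx
  let q : K[X] := ∑ k ∈ Finset.range (p.natDegree + 1), monomial k (f (p.coeff k))
  have hq : q = 0 := Polynomial.funext fun t => by
    have hft := hf _ (h t)
    rw [eval_eq_sum_range] at hft
    simpa [q, eval_finsetSum, ← map_pow, ← Algebra.commutes, ← Algebra.smul_def, mul_comm]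
      using hft
  have hqj := congrArg (coeff · j) hq
  simp [q, finsetSum_coeff, coeff_monomial, hjdeg] at hqj
  exact hfj hqj

end Polynomial

theorem exists_pow_smul_one_and_diag_eq {K A : Type*} [Field K] [Infinite K] [Ring A] [Algebra K A]
    {φ : A → K} {N : ℕ} (F : ∀ i : Fin (N + 1), MultilinearMap K (fun _ : Fin i => A) K)
    (hF : ∀ a, φ a = ∑ i, F i fun _ => a) (hmul : ∀ a b, φ (a * b) = φ a * φ b) (h1 : φ 1 = 1) :
    ∃ n, (∀ z : K, φ (z • 1) = z ^ n) ∧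
      ∃ G : MultilinearMap K (fun _ : Fin n => A) K, ∀ a, G (fun _ => a) = φ a := by
  let P (a : A) : K[X] := ∑ i : Fin (N + 1), monomial (i : ℕ) (F i fun _ => a)
  have hP (a : A) (z : K) : (P a).eval z = φ (z • a) := by
    simp [P, eval_finsetSum, hF, MultilinearMap.map_smul_univ, mul_comm]
  have hcoeff (a : A) (i : Fin (N + 1)) : (P a).coeff i = F i fun _ => a := by
    simp [P, finsetSum_coeff, coeff_monomial, Fin.val_inj]
  have hP1 : (P 1).eval 1 = 1 := by rw [hP, one_smul, h1]
  have hpow := eval_eq_pow_natDegree_of_eval_mul (p := P 1) (fun h => by simp [h] at hP1)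
    fun z w => by simp only [hP, ← hmul, smul_mul_smul, mul_one]
  set n := (P 1).natDegree
  have hn : n < N + 1 := Nat.lt_succ_of_le <| natDegree_sum_le_of_forall_le _ _ fun i _ =>
    (natDegree_monomial_le _).trans (Nat.le_of_lt_succ i.2)
  have hzn (z : K) : φ (z • 1) = z ^ n := by rw [← hP, hpow]
  have hhom (a : A) : P a = C (φ a) * X ^ n := Polynomial.funext fun z => by
    rw [hP, ← smul_one_mul, hmul, hzn]
    simp [mul_comm]
  refine ⟨n, hzn, F ⟨n, hn⟩, fun a => ?_⟩
  simpa [hhom] using (hcoeff a ⟨n, hn⟩).symm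

theorem Finsupp.sum_single_comp_eq_iff_bijective {ι : Type*} [Fintype ι] {r : ι → ι} :
    ∑ i, single (r i) 1 = ∑ i, single i (1 : ℕ) ↔ r.Bijective := by
  refine ⟨fun hr => Finite.surjective_iff_bijective.1 fun j => ?_,
    fun hr => Fintype.sum_bijective r hr _ _ fun _ => rfl⟩
  by_contra! hj
  simpa [single_apply, hj] using congrArg (· j) hr

namespace MultilinearMap

variable {K M ι : Type*} [Field K] [AddCommGroup M] [Module K M] [Fintype ι] [DecidableEq ι]

theorem map_diag_sum_smul (L : MultilinearMap K (fun _ : ι => M) K) (t : ι → K) (v : ι → M) :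
    L (fun _ => ∑ j, t j • v j) = ∑ r : ι → ι, (∏ i, t (r i)) * L (v ∘ r) := by
  rw [L.map_sum fun _ j => t j • v j]
  exact Finset.sum_congr rfl fun r _ => L.map_smul_univ (fun i => t (r i)) (v ∘ r)

theorem eq_zero_of_symmetric_of_diag_eq_zero [CharZero K] (L : MultilinearMap K (fun _ : ι => M) K)
    (hsymm : ∀ (σ : Equiv.Perm ι) (v : ι → M), L (v ∘ σ) = L v)
    (hdiag : ∀ a, L (fun _ => a) = 0) : L = 0 := by
  ext v
  -- `P t = L (∑ tⱼ vⱼ, …, ∑ tⱼ vⱼ)` vanishes identically, and its coefficient of `∏ Xᵢ` is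
  -- `∑ σ, L (v ∘ σ) = n! • L v`
  let P : MvPolynomial ι K :=
    ∑ r : ι → ι, MvPolynomial.monomial (∑ i, Finsupp.single (r i) 1) (L (v ∘ r))
  have hP : P = 0 := MvPolynomial.funext fun t => by
    simp [P, MvPolynomial.monomial_sum_index, MvPolynomial.eval_monomial,
      ← hdiag (∑ j, t j • v j), map_diag_sum_smul, mul_comm]
  have hcoeff : P.coeff (∑ i, Finsupp.single i 1) = ∑ σ : Equiv.Perm ι, L (v ∘ σ) := by
    simp only [P, MvPolynomial.coeff_sum, MvPolynomial.coeff_monomial,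
      Finsupp.sum_single_comp_eq_iff_bijective, ← Finset.sum_filter]
    rw [Finset.sum_subtype (p := Function.Bijective) _ fun r => by
      simp only [Finset.mem_filter, Finset.mem_univ, true_and]]
    exact Equiv.sum_comp Equiv.bijectiveEquiv fun σ => L (v ∘ σ)
  simpa [hP, hsymm, Nat.factorial_ne_zero] using hcoeff

theorem exists_symmetric_diag_eq [CharZero K] {N : Type*} [AddCommGroup N] [Module K N]
    (f : MultilinearMap K (fun _ : ι => M) N) :
    ∃ g : MultilinearMap K (fun _ : ι => M) N,
      (∀ (σ : Equiv.Perm ι) (v : ι → M), g (v ∘ σ) = g v) ∧ ∀ a, g (fun _ => a) = f fun _ => a := by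
  refine ⟨((Fintype.card ι).factorial : K)⁻¹ • ∑ σ : Equiv.Perm ι, f.domDomCongr σ,
    fun τ v => ?_, fun a => ?_⟩
  · simp only [smul_apply, sum_apply, domDomCongr_apply]
    congr 1
    exact Equiv.sum_comp (Equiv.mulLeft τ) fun σ => f fun i => v (σ i)
  · simp [Fintype.card_perm, ← Nat.cast_smul_eq_nsmul K, smul_smul, Nat.factorial_ne_zero]

theorem map_mul_const_of_symmetric [CharZero K] {A : Type*} [Ring A] [Algebra K A]
    (G : MultilinearMap K (fun _ : ι => A) K)
    (hsymm : ∀ (σ : Equiv.Perm ι) (v : ι → A), G (v ∘ σ) = G v)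
    (hmul : ∀ a b, G (fun _ => a * b) = G (fun _ => a) * G fun _ => b) (v : ι → A) (b : A) :
    G (fun i => v i * b) = G v * G fun _ => b := by
  let L := G.compLinearMap (fun _ => LinearMap.mulRight K b) - G (fun _ => b) • G
  have hL : L = 0 := eq_zero_of_symmetric_of_diag_eq_zero L
    (fun σ w => by
      simp only [L, sub_apply, smul_apply, compLinearMap_apply, LinearMap.mulRight_apply,
        hsymm σ w]
      rw [← hsymm σ fun i => w i * b]
      rfl)
    (fun a => by simp [L, hmul, mul_comm])
  simpa [L, sub_eq_zero, mul_comm] using congrArg (· v) hL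

end MultilinearMap

theorem LinearMap.map_mul_of_mem_adjoin {K B : Type*} [CommSemiring K] [Semiring B] [Algebra K B]
    (Λ : B →ₗ[K] K) (h1 : Λ 1 = 1) {S : Set B} (hS : ∀ s ∈ S, ∀ x, Λ (x * s) = Λ x * Λ s)
    {d : B} (hd : d ∈ Algebra.adjoin K S) (x : B) : Λ (x * d) = Λ x * Λ d := by
  induction hd using Algebra.adjoin_induction generalizing x with
  | mem s hs => exact hS s hs x
  | algebraMap r => simp [Algebra.algebraMap_eq_smul_one, h1, mul_comm]
  | add p q _ _ hp hq => simp [mul_add, hp, hq]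
  | mul p q _ _ hp hq => rw [← mul_assoc, hq, hp, hq p, mul_assoc]

theorem Subalgebra.exists_algHom_extend_of_isIntegral {K B : Type*} [Field K] [IsAlgClosed K]
    [CommRing B] [Algebra K B] (D : Subalgebra K B) [Algebra.IsIntegral D B] (ρ : D →ₐ[K] K) :
    ∃ Ψ : B →ₐ[K] K, ∀ d : D, Ψ d = ρ d := by
  have hρ : Function.Surjective ρ := fun r => ⟨algebraMap K D r, by simp⟩
  have := RingHom.ker_isMaximal_of_surjective ρ hρ
  obtain ⟨Q, hQ, hQJ⟩ := Ideal.exists_ideal_over_maximal_of_isIntegral (S := B) (RingHom.ker ρ)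
    (by simp [(RingHom.injective_iff_ker_eq_bot _).1 (FaithfulSMul.algebraMap_injective D B)])
  have := hQ.isPrime
  have hmk : ∀ d : D, Ideal.Quotient.mk Q d = algebraMap K (B ⧸ Q) (ρ d) := fun d => by
    have hJ : d - algebraMap K D (ρ d) ∈ RingHom.ker ρ := by simp
    rw [← hQJ, Ideal.mem_comap] at hJ
    rw [← Ideal.Quotient.mk_algebraMap, Ideal.Quotient.eq]
    simpa using hJ
  have : Algebra.IsIntegral K (B ⧸ Q) := ⟨fun x => by
    obtain ⟨b, rfl⟩ := Ideal.Quotient.mk_surjective x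
    obtain ⟨p, hpm, hpb⟩ := Algebra.IsIntegral.isIntegral (R := D) b
    refine ⟨p.map ρ.toRingHom, hpm.map _, ?_⟩
    rw [Polynomial.eval₂_map]
    have : (algebraMap K (B ⧸ Q)).comp ρ.toRingHom = (Ideal.Quotient.mk Q).comp (algebraMap D B) :=
      RingHom.ext fun d => (hmk d).symm
    rw [this, ← Polynomial.hom_eval₂, hpb, map_zero]⟩
  let e := AlgEquiv.ofBijective (Algebra.ofId K (B ⧸ Q))
    IsAlgClosed.algebraMap_bijective_of_isIntegral
  refine ⟨e.symm.toAlgHom.comp (Ideal.Quotient.mkₐ K Q), fun d => ?_⟩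
  simp [hmk]

namespace PiTensorProduct

theorem prod_singleAlgHom {R ι : Type*} {A : ι → Type*} [CommSemiring R] [Fintype ι]
    [DecidableEq ι] [∀ i, CommSemiring (A i)] [∀ i, Algebra R (A i)] (v : ∀ i, A i) :
    ∏ i, singleAlgHom (R := R) (A := A) i (v i) = tprod R v := by
  change ∏ i, tprodMonoidHom R (Pi.mulSingle i (v i)) = _
  rw [← map_prod, Finset.univ_prod_mulSingle]
  rfl

variable (K A ι : Type*) [Field K] [CommRing A] [Algebra K A]

def diagonalSubalgebra : Subalgebra K (⨂[K] (_ : ι), A) :=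
  Algebra.adjoin K (Set.range fun a : A => tprod K fun _ : ι => a)

variable {K A ι}

theorem tprod_const_mem_diagonalSubalgebra (a : A) :
    tprod K (fun _ : ι => a) ∈ diagonalSubalgebra K A ι :=
  Algebra.subset_adjoin ⟨a, rfl⟩

variable [Infinite K] [Fintype ι] [DecidableEq ι]

theorem isIntegral_singleAlgHom (i : ι) (a : A) :
    IsIntegral (diagonalSubalgebra K A ι) (singleAlgHom (R := K) (A := fun _ => A) i a) := by
  let p := ∏ j : ι, (X - C (singleAlgHom (R := K) (A := fun _ => A) j a))
  have hmonic : p.Monic := monic_prod_of_monic _ _ fun j _ => monic_X_sub_C _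
  have hcoeff : ∀ k, p.coeff k ∈ Subalgebra.toSubmodule (diagonalSubalgebra K A ι) :=
    coeff_mem_of_forall_eval_algebraMap_mem fun t => by
      have : p.eval (algebraMap K _ t) = tprod K fun _ : ι => algebraMap K A t - a := by
        rw [← prod_singleAlgHom]
        simp only [p, eval_prod, eval_sub, eval_X, eval_C, map_sub, AlgHom.commutes]
      rw [this]
      exact tprod_const_mem_diagonalSubalgebra _
  have hlifts : p ∈ Polynomial.lifts (algebraMap (diagonalSubalgebra K A ι) _) :=
    (lifts_iff_coeff_lifts p).2 fun k => ⟨⟨p.coeff k, hcoeff k⟩, rfl⟩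
  obtain ⟨q, hqp, -, hq⟩ := lifts_and_natDegree_eq_and_monic hlifts hmonic
  refine ⟨q, hq, ?_⟩
  rw [eval₂_eq_eval_map, hqp, eval_prod]
  exact Finset.prod_eq_zero (Finset.mem_univ i) (by simp)

instance isIntegral_diagonalSubalgebra :
    Algebra.IsIntegral (diagonalSubalgebra K A ι) (⨂[K] (_ : ι), A) := by
  refine ⟨fun x => ?_⟩
  change x ∈ integralClosure (diagonalSubalgebra K A ι) _
  induction x using PiTensorProduct.induction_on with
  | smul_tprod r v =>
    rw [← prod_singleAlgHom, ← algebraMap_smul (diagonalSubalgebra K A ι) r]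
    exact Subalgebra.smul_mem _ (Subalgebra.prod_mem _ fun i _ =>
      (mem_integralClosure_iff _ _).2 (isIntegral_singleAlgHom i (v i))) _
  | add x y hx hy => exact Subalgebra.add_mem _ hx hy

end PiTensorProduct

open PiTensorProduct in
theorem MultilinearMap.exists_diag_eq_prod_algHom {K A ι : Type*} [Field K] [IsAlgClosed K]
    [CommRing A] [Algebra K A] [Fintype ι] [DecidableEq ι]
    (G : MultilinearMap K (fun _ : ι => A) K) (h1 : G 1 = 1)
    (hmul : ∀ v b, G (fun i => v i * b) = G v * G fun _ => b) :
    ∃ χ : ι → (A →ₐ[K] K), ∀ a, G (fun _ => a) = ∏ i, χ i a := by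
  let Λ := lift G
  have hΛ1 : Λ 1 = 1 := by simpa [Λ, one_def] using h1
  have hΛ (x : ⨂[K] (_ : ι), A) (b : A) :
      Λ (x * tprod K fun _ => b) = Λ x * Λ (tprod K fun _ => b) := by
    induction x using PiTensorProduct.induction_on with
    | smul_tprod r v => simp [Λ, tprod_mul_tprod, Pi.mul_def, hmul, mul_assoc]
    | add x y hx hy => simp [add_mul, hx, hy]
  let ρ : diagonalSubalgebra K A ι →ₐ[K] K :=
    AlgHom.ofLinearMap (Λ ∘ₗ (diagonalSubalgebra K A ι).val.toLinearMap) hΛ1 fun p q =>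
      Λ.map_mul_of_mem_adjoin hΛ1 (by rintro _ ⟨b, rfl⟩ x; exact hΛ x b) q.2 p
  obtain ⟨Ψ, hΨ⟩ := (diagonalSubalgebra K A ι).exists_algHom_extend_of_isIntegral ρ
  refine ⟨fun i => Ψ.comp (singleAlgHom (A := fun _ => A) i), fun a => ?_⟩
  simp only [AlgHom.comp_apply, ← map_prod, prod_singleAlgHom]
  rw [hΨ ⟨_, tprod_const_mem_diagonalSubalgebra a⟩]
  exact (lift.tprod _).symm

theorem stmt_2_general {K A : Type*} [Field K] [IsAlgClosed K] [CharZero K]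
    [CommRing A] [Algebra K A]
    (φ : A → K)
    (hpoly : ∃ (N : ℕ) (F : ∀ i : Fin (N + 1), MultilinearMap K (fun _ : Fin (i : ℕ) => A) K),
      ∀ a : A, φ a = ∑ i : Fin (N + 1), F i (fun _ => a))
    (hmul : ∀ a b : A, φ (a * b) = φ a * φ b)
    (hne : φ ≠ 0) :
    ∃ n : ℕ, (∀ z : K, φ (z • (1 : A)) = z ^ n) ∧
      ∃ χ : Fin n → (A →ₐ[K] K), ∀ a : A, φ a = ∏ i, χ i a := by
  obtain ⟨N, F, hF⟩ := hpoly
  obtain ⟨a, ha⟩ : ∃ a, φ a ≠ 0 := by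
    by_contra! h
    exact hne (funext h)
  have h1 : φ 1 = 1 := mul_left_cancel₀ ha (by rw [← hmul, mul_one, mul_one])
  obtain ⟨n, hzn, G₀, hG₀⟩ := exists_pow_smul_one_and_diag_eq F hF hmul h1
  obtain ⟨G, hsymm, hG⟩ := G₀.exists_symmetric_diag_eq
  simp only [hG₀] at hG
  have hGmul (v : Fin n → A) (b : A) : G (fun i => v i * b) = G v * G fun _ => b :=
    G.map_mul_const_of_symmetric hsymm (by simp [hG, hmul]) v b
  obtain ⟨χ, hχ⟩ := G.exists_diag_eq_prod_algHom (by simpa [Pi.one_def, hG] using h1) hGmul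
  exact ⟨n, hzn, χ, fun a => by rw [← hG, hχ]⟩

/-- Algebraic version: a nonzero multiplicative polynomial map `φ : A → K` on a finitely
generated commutative unital algebra over an algebraically closed field of characteristic
zero satisfies `φ (z • 1) = z ^ n` and is a product of `n` algebra homomorphisms. -/
theorem stmt_2 {K A : Type*} [Field K] [IsAlgClosed K] [CharZero K]
    [CommRing A] [Algebra K A] [Algebra.FiniteType K A]
    (φ : A → K)
    (hpoly : ∃ (N : ℕ) (F : ∀ i : Fin (N + 1), MultilinearMap K (fun _ : Fin (i : ℕ) => A) K),
      ∀ a : A, φ a = ∑ i : Fin (N + 1), F i (fun _ => a))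
    (hmul : ∀ a b : A, φ (a * b) = φ a * φ b)
    (hne : φ ≠ 0) :
    ∃ n : ℕ, (∀ z : K, φ (z • (1 : A)) = z ^ n) ∧
      ∃ χ : Fin n → (A →ₐ[K] K), ∀ a : A, φ a = ∏ i, χ i a :=
  stmt_2_general φ hpoly hmul hne
end

section
/- Let A be a finitely generated unital commutative algebra over an algebraically closed field K, and let φ: A → K be a nonzero multiplicative polynomial map. If φ(z·1) = z for all z ∈ K (i.e., φ is homogeneous of degree 1), then φ is an algebra homomorphism. -/
/-- A nonzero multiplicative polynomial map `φ : A → K` which is homogeneous of degree `1`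
(i.e. `φ (z • 1) = z`) on a finitely generated commutative unital algebra over an
algebraically closed field of characteristic zero is an algebra homomorphism. -/
theorem stmt_3 {K A : Type*} [Field K] [IsAlgClosed K] [CharZero K]
    [CommRing A] [Algebra K A] [Algebra.FiniteType K A]
    (φ : A → K)
    (hpoly : ∃ (N : ℕ) (F : ∀ i : Fin (N + 1), MultilinearMap K (fun _ : Fin (i : ℕ) => A) K),
      ∀ a : A, φ a = ∑ i : Fin (N + 1), F i (fun _ => a))
    (hmul : ∀ a b : A, φ (a * b) = φ a * φ b)
    (hne : φ ≠ 0)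
    (hdeg : ∀ z : K, φ (z • (1 : A)) = z) :
    ∃ ψ : A →ₐ[K] K, ∀ a : A, ψ a = φ a := by
  obtain ⟨N, F, hF⟩ := hpoly
  -- homogeneity of degree one
  have hsmul : ∀ (z : K) (a : A), φ (z • a) = z * φ a := by
    intro z a
    have h : z • a = (z • (1 : A)) * a := by rw [smul_mul_assoc, one_mul]
    rw [h, hmul, hdeg]
  -- the polynomial identity
  have hp : ∀ a : A,
      (∑ i : Fin (N + 1), Polynomial.C (F i fun _ => a) * Polynomial.X ^ (i : ℕ))
        = Polynomial.C (φ a) * Polynomial.X := by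
    intro a
    apply Polynomial.funext
    intro z
    have h1 : φ (z • a) = ∑ i : Fin (N + 1), z ^ (i : ℕ) * F i (fun _ => a) := by
      rw [hF (z • a)]
      refine Finset.sum_congr rfl fun i _ => ?_
      have := (F i).map_smul_univ (fun _ => z) (fun _ => a)
      simpa [smul_eq_mul] using this
    have h3 : ∑ i : Fin (N + 1), z ^ (i : ℕ) * F i (fun _ => a) = z * φ a := by
      rw [← h1, hsmul]
    simp only [Polynomial.eval_finset_sum, Polynomial.eval_mul, Polynomial.eval_C,
      Polynomial.eval_pow, Polynomial.eval_X]
    calc ∑ i : Fin (N + 1), (F i fun _ => a) * z ^ (i : ℕ)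
        = ∑ i : Fin (N + 1), z ^ (i : ℕ) * (F i fun _ => a) := by
          exact Finset.sum_congr rfl fun i _ => mul_comm _ _
      _ = z * φ a := h3
      _ = φ a * z := mul_comm _ _
  -- coefficient extraction
  have hcoeff : ∀ (a : A) (i : Fin (N + 1)),
      F i (fun _ => a) = if 1 = (i : ℕ) then φ a else 0 := by
    intro a i
    have h := congrArg (fun p => Polynomial.coeff p (i : ℕ)) (hp a)
    simp only [Polynomial.finset_sum_coeff, Polynomial.coeff_C_mul,
      Polynomial.coeff_X_pow, Polynomial.coeff_X, mul_ite, mul_one, mul_zero] at h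
    rw [Finset.sum_eq_single i] at h
    · simpa using h
    · intro j _ hj
      have : (i : ℕ) ≠ (j : ℕ) := fun hc => hj (Fin.val_injective hc.symm)
      simp [this]
    · simp
  cases N with
  | zero =>
    exfalso
    have h1 : φ (1 : A) = 0 := by
      rw [hF (1 : A), Fin.sum_univ_succ, hcoeff (1 : A) 0]
      simp
    have h2 : φ (1 : A) = 1 := by
      have := hdeg 1
      rwa [one_smul] at this
    rw [h1] at h2
    exact zero_ne_one h2
  | succ N' =>
    have h1lt : 1 < N' + 1 + 1 := by omega
    set i₁ : Fin (N' + 1 + 1) := ⟨1, h1lt⟩ with hi₁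
    have hval : (i₁ : ℕ) = 1 := rfl
    have hφ : ∀ a : A, φ a = F i₁ (fun _ => a) := by
      intro a
      rw [hcoeff a i₁, if_pos hval.symm]
    have hadd : ∀ a b : A, φ (a + b) = φ a + φ b := by
      intro a b
      have e : ∀ x : A, (fun _ : Fin ((i₁ : ℕ)) => x)
          = Function.update (fun _ : Fin ((i₁ : ℕ)) => a) ⟨0, by omega⟩ x := by
        intro x
        funext j
        have hj : j = ⟨0, by omega⟩ := by
          apply Fin.ext
          have := j.isLt
          omega
        rw [hj]
        simp [Function.update]
      rw [hφ (a + b), hφ a, hφ b, e (a + b), (F i₁).map_update_add, ← e a, ← e b]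
    refine ⟨{ toFun := φ,
              map_one' := by have := hdeg 1; rwa [one_smul] at this,
              map_mul' := hmul,
              map_zero' := by have := hdeg 0; rwa [zero_smul] at this,
              map_add' := hadd,
              commutes' := fun z => by
                rw [Algebra.algebraMap_eq_smul_one]; exact hdeg z }, fun a => rfl⟩
end

section
/- Let A be a unital commutative complex Banach algebra and Γ ⊆ Aut(A) a finite group of (continuous) algebra automorphisms. Then any unital algebra homomorphism φ: A^Γ → ℂ extends to a unital algebra homomorphism φ̃: A → ℂ. -/
/-- The subalgebra of fixed points of a group `Γ` of algebra automorphisms of `A`. -/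
def fixedSubalgebra (A : Type*) [CommRing A] [Algebra ℂ A]
    (Γ : Subgroup (A ≃ₐ[ℂ] A)) : Subalgebra ℂ A where
  carrier := {a : A | ∀ g ∈ Γ, g a = a}
  mul_mem' := by
    intro a b ha hb g hg
    rw [map_mul, ha g hg, hb g hg]
  add_mem' := by
    intro a b ha hb g hg
    rw [map_add, ha g hg, hb g hg]
  one_mem' := fun g _ => map_one g
  algebraMap_mem' := fun r g _ => (g : A ≃ₐ[ℂ] A).commutes r

/-! Each `a : A` is a root of `∏ g ∈ Γ, (X - g a)`, whose coefficients are `Γ`-fixed, so `A` is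
integral over `A^Γ`. By lying over, the maximal ideal `ker φ` of `A^Γ` lies under a maximal ideal
of `A`, and by Gelfand–Mazur that ideal is the kernel of a character of `A`, which then agrees
with `φ` on `A^Γ`. -/

instance fixedSubalgebra.isInvariant (A : Type*) [CommRing A] [Algebra ℂ A]
    (Γ : Subgroup (A ≃ₐ[ℂ] A)) : Algebra.IsInvariant (fixedSubalgebra A Γ) A Γ :=
  ⟨fun a ha => ⟨⟨a, fun g hg => ha ⟨g, hg⟩⟩, rfl⟩⟩

theorem Subalgebra.exists_algHom_extend_of_isIntegral_s8 {A : Type*} [NormedCommRing A]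
    [NormedAlgebra ℂ A] [CompleteSpace A] (S : Subalgebra ℂ A) [Algebra.IsIntegral S A]
    (φ : S →ₐ[ℂ] ℂ) : ∃ ψ : A →ₐ[ℂ] ℂ, ∀ x : S, ψ x = φ x := by
  have : (RingHom.ker φ).IsMaximal :=
    RingHom.ker_isMaximal_of_surjective φ fun z => ⟨algebraMap ℂ S z, φ.commutes z⟩
  obtain ⟨M, _, _⟩ := Ideal.exists_maximal_ideal_liesOver_of_isIntegral (S := A) (RingHom.ker φ)
  refine ⟨WeakDual.CharacterSpace.toAlgHom M.toCharacterSpace, fun x => ?_⟩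
  have hker : x - algebraMap ℂ S (φ x) ∈ RingHom.ker φ := by simp
  have hM : (x : A) - algebraMap ℂ A (φ x) ∈ M := by
    simpa using (Ideal.mem_of_liesOver M (RingHom.ker φ) _).mp hker
  have hψ := M.toCharacterSpace_apply_eq_zero_of_mem hM
  rw [map_sub, sub_eq_zero] at hψ
  exact hψ.trans (AlgHomClass.commutes _ _)

theorem stmt_8_general {A : Type*} [NormedCommRing A] [NormedAlgebra ℂ A] [CompleteSpace A]
    (Γ : Subgroup (A ≃ₐ[ℂ] A)) [Finite Γ]
    (φ : fixedSubalgebra A Γ →ₐ[ℂ] ℂ) :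
    ∃ ψ : A →ₐ[ℂ] ℂ, ∀ x : fixedSubalgebra A Γ, ψ x = φ x :=
  have := Algebra.IsInvariant.isIntegral (fixedSubalgebra A Γ) A Γ
  (fixedSubalgebra A Γ).exists_algHom_extend_of_isIntegral_s8 φ

/-- Let `A` be a unital commutative complex Banach algebra and `Γ` a finite group of
continuous algebra automorphisms of `A`. Then every unital algebra homomorphism
`φ : A^Γ → ℂ` extends to a unital algebra homomorphism `A → ℂ`. -/
theorem stmt_8 {A : Type*} [NormedCommRing A] [NormedAlgebra ℂ A] [CompleteSpace A]
    (Γ : Subgroup (A ≃ₐ[ℂ] A)) [Finite Γ]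
    (hcont : ∀ g ∈ Γ, Continuous g)
    (φ : fixedSubalgebra A Γ →ₐ[ℂ] ℂ) :
    ∃ ψ : A →ₐ[ℂ] ℂ, ∀ x : fixedSubalgebra A Γ, ψ x = φ x :=
  stmt_8_general Γ φ
end

section
/- Let A be a unital commutative Banach algebra and φ: A → ℂ a holomorphic (complex analytic) map satisfying φ(ab) = φ(a)φ(b) for all a, b ∈ A and φ(1) = 1, with φ(z·1) = z^n for all z ∈ ℂ. Then φ is a continuous homogeneous polynomial of degree n; that is, the Taylor expansion of φ at 0 has only the degree-n term, and there is a continuous symmetric n-linear form φ̃: Aⁿ → ℂ with φ(a) = φ̃(a, …, a). -/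
/-!
Restricting `φ` to the complex line through `a` gives `z ↦ φ (z • a) = z ^ n φ(a)`, because
`z • a = (z • 1) * a` and `φ` is multiplicative. Differentiating `n` times at `0` along that line
shows that the `n`-th derivative of `φ` at `0`, evaluated on the diagonal, is `n! φ(a)`. So
`F = (n!)⁻¹ D^n φ(0)` works, and it is symmetric because `φ` is analytic.
-/

open scoped ContDiff

theorem map_smul_eq_pow_mul_of_map_mul {R A : Type*} [CommSemiring R] [Semiring A] [Algebra R A]
    {φ : A → R} {n : ℕ} (hmul : ∀ a b : A, φ (a * b) = φ a * φ b)
    (hdeg : ∀ z : R, φ (z • (1 : A)) = z ^ n) (z : R) (a : A) :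
    φ (z • a) = z ^ n * φ a := by
  rw [← hdeg, ← hmul, smul_mul_assoc, one_mul]

theorem iteratedFDeriv_zero_apply_diag_of_homogeneous {𝕜 E F : Type*} [NontriviallyNormedField 𝕜]
    [NormedAddCommGroup E] [NormedSpace 𝕜 E] [NormedAddCommGroup F] [NormedSpace 𝕜 F]
    {f : E → F} {n : ℕ} (hf : ContDiff 𝕜 n f) (hhom : ∀ (c : 𝕜) (x : E), f (c • x) = c ^ n • f x)
    (x : E) :
    iteratedFDeriv 𝕜 n f 0 (fun _ => x) = n.factorial • f x := by
  set L : 𝕜 →L[𝕜] E := ContinuousLinearMap.toSpanSingleton 𝕜 x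
  have hline : f ∘ L = fun c => c ^ n • f x := funext fun c => hhom c x
  calc iteratedFDeriv 𝕜 n f 0 (fun _ => x)
      = iteratedFDeriv 𝕜 n (f ∘ L) 0 (fun _ => 1) := by
        rw [L.iteratedFDeriv_comp_right hf 0 le_rfl]
        simp [L]
    _ = iteratedDeriv n (fun c : 𝕜 => c ^ n) 0 • f x := by
        rw [← iteratedDeriv_eq_iteratedFDeriv, hline,
          iteratedDeriv_smul_const (contDiff_id.pow n).contDiffAt]
    _ = n.factorial • f x := by
        simp [Nat.descFactorial_self, Nat.cast_smul_eq_nsmul]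

theorem stmt_10_general {A : Type*} [NormedCommRing A] [NormedAlgebra ℂ A]
    (φ : A → ℂ) (n : ℕ)
    (hφ : ∀ x : A, AnalyticAt ℂ φ x)
    (hmul : ∀ a b : A, φ (a * b) = φ a * φ b)
    (hdeg : ∀ z : ℂ, φ (z • (1 : A)) = z ^ n) :
    ∃ F : ContinuousMultilinearMap ℂ (fun _ : Fin n => A) ℂ,
      (∀ (σ : Equiv.Perm (Fin n)) (v : Fin n → A), F (v ∘ σ) = F v) ∧
      ∀ a : A, φ a = F (fun _ => a) := by
  have hsmooth : ContDiff ℂ ω φ := AnalyticOnNhd.contDiff fun x _ => hφ x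
  have hdiag := iteratedFDeriv_zero_apply_diag_of_homogeneous (hsmooth.of_le le_top)
    (map_smul_eq_pow_mul_of_map_mul hmul hdeg)
  refine ⟨(n.factorial : ℂ)⁻¹ • iteratedFDeriv ℂ n φ 0, fun σ v => ?_, fun a => ?_⟩
  · simp only [smul_apply, hsmooth.contDiffAt.iteratedFDeriv_comp_perm v σ]
  · rw [smul_apply, hdiag, nsmul_eq_mul, smul_eq_mul,
      inv_mul_cancel_left₀ (Nat.cast_ne_zero.mpr n.factorial_ne_zero)]

/-- A holomorphic multiplicative map `φ : A → ℂ` with `φ 1 = 1` and `φ (z • 1) = z ^ n`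
is a continuous homogeneous polynomial of degree `n`: there is a continuous symmetric
`n`-linear form `F` with `φ a = F (a, …, a)`. -/
theorem stmt_10 {A : Type*} [NormedCommRing A] [NormedAlgebra ℂ A] [NormOneClass A]
    (φ : A → ℂ) (n : ℕ)
    (hφ : ∀ x : A, AnalyticAt ℂ φ x)
    (hmul : ∀ a b : A, φ (a * b) = φ a * φ b)
    (h1 : φ 1 = 1)
    (hdeg : ∀ z : ℂ, φ (z • (1 : A)) = z ^ n) :
    ∃ F : ContinuousMultilinearMap ℂ (fun _ : Fin n => A) ℂ,
      (∀ (σ : Equiv.Perm (Fin n)) (v : Fin n → A), F (v ∘ σ) = F v) ∧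
      ∀ a : A, φ a = F (fun _ => a) :=
  stmt_10_general φ n hφ hmul hdeg
end
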